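/- arXiv:1706.04845 — 2 statements merged into one kernel-verified Lean document; each statement's English description precedes it below -/
import Mathlib

section
/- Let f : X → S be a proper morphism of noetherian F_p-schemes, let L be an invertible sheaf on X, and let f' : X_red → X → S be the composition of the closed immersion of the reduction with f. Then the f-stable base locus of L equals the f'-stable base locus of L|_{X_red}: B_f(L) = B_{f'}(L|_{X_red}). In particular, L is f-semi-ample if and only if L|_{X_red} is f'-semi-ample. -/
open AlgebraicGeometry CategoryTheory CategoryTheory.Limits TopologicalSpace Opposite

universe u

namespace FormalPaper

variable {X Y : Scheme.{u}}

noncomputable abbrev resU {X : Scheme.{u}} {A B : X.Opens} (h : B ≤ A) :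
    Γ(X, A)ˣ →* Γ(X, B)ˣ :=
  Units.map (X.presheaf.map (homOfLE h).op).hom.toMonoidHom

lemma resU_resU {A B C : X.Opens} (h : C ≤ B) (h' : B ≤ A) (u : Γ(X, A)ˣ) :
    resU h (resU h' u) = resU (h.trans h') u := by
  ext
  show (X.presheaf.map (homOfLE h').op ≫ X.presheaf.map (homOfLE h).op).hom u.val = _
  rw [← Functor.map_comp]
  exact congrArg (fun α => (X.presheaf.map α).hom u.val) (Subsingleton.elim _ _)

lemma preimage_inf_le (g : Y ⟶ X) (A B : X.Opens) :
    g ⁻¹ᵁ A ⊓ g ⁻¹ᵁ B ≤ g ⁻¹ᵁ (A ⊓ B) := by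
  rintro x ⟨h₁, h₂⟩
  exact ⟨h₁, h₂⟩

lemma resU_appLE (g : Y ⟶ X) {A : X.Opens} {B C : Y.Opens} (e : B ≤ g ⁻¹ᵁ A) (h : C ≤ B)
    (u : Γ(X, A)ˣ) :
    resU h (Units.map (g.appLE A B e).hom.toMonoidHom u) =
      Units.map (g.appLE A C (h.trans e)).hom.toMonoidHom u := by
  ext
  show (g.appLE A B e ≫ Y.presheaf.map (homOfLE h).op).hom u.val = _
  rw [g.appLE_map]
  rfl

lemma appLE_resU (g : Y ⟶ X) {A A' : X.Opens} {C : Y.Opens} (h : A ≤ A') (e : C ≤ g ⁻¹ᵁ A)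
    (u : Γ(X, A')ˣ) :
    Units.map (g.appLE A C e).hom.toMonoidHom (resU h u) =
      Units.map (g.appLE A' C (e.trans ((Opens.map g.base).map (homOfLE h)).le)).hom.toMonoidHom u := by
  ext
  show (X.presheaf.map (homOfLE h).op ≫ g.appLE A C e).hom u.val = _
  rw [g.map_appLE]
  rfl

structure InvSheaf (X : Scheme.{u}) : Type (u + 1) where
  ι : Type u
  U : ι → X.Opens
  cover : ∀ x : X, ∃ i, x ∈ U i
  t : ∀ i j, Γ(X, U i ⊓ U j)ˣ
  cocycle : ∀ i j k,
    resU (inf_le_left : U i ⊓ U j ⊓ U k ≤ U i ⊓ U j) (t i j) *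
      resU (le_inf (inf_le_left.trans inf_le_right) inf_le_right :
        U i ⊓ U j ⊓ U k ≤ U j ⊓ U k) (t j k) =
      resU (le_inf (inf_le_left.trans inf_le_left) inf_le_right :
        U i ⊓ U j ⊓ U k ≤ U i ⊓ U k) (t i k)

namespace InvSheaf

noncomputable def pow (L : InvSheaf X) (n : ℤ) : InvSheaf X where
  ι := L.ι
  U := L.U
  cover := L.cover
  t i j := L.t i j ^ n
  cocycle i j k := by
    rw [map_zpow, map_zpow, map_zpow, ← L.cocycle i j k, mul_zpow]

noncomputable def mul (L M : InvSheaf X) : InvSheaf X where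
  ι := L.ι × M.ι
  U p := L.U p.1 ⊓ M.U p.2
  cover x := by
    obtain ⟨i, hi⟩ := L.cover x
    obtain ⟨j, hj⟩ := M.cover x
    exact ⟨⟨i, j⟩, hi, hj⟩
  t p q :=
    resU (le_inf (inf_le_left.trans inf_le_left) (inf_le_right.trans inf_le_left)) (L.t p.1 q.1) *
    resU (le_inf (inf_le_left.trans inf_le_right) (inf_le_right.trans inf_le_right)) (M.t p.2 q.2)
  cocycle p q r := by
    simp only [map_mul, resU_resU]
    have hL := congrArg (resU (le_inf (le_inf
        (inf_le_left.trans (inf_le_left.trans inf_le_left))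
        ((inf_le_left.trans inf_le_right).trans inf_le_left)) (inf_le_right.trans inf_le_left) :
        (L.U p.1 ⊓ M.U p.2) ⊓ (L.U q.1 ⊓ M.U q.2) ⊓ (L.U r.1 ⊓ M.U r.2) ≤
          L.U p.1 ⊓ L.U q.1 ⊓ L.U r.1)) (L.cocycle p.1 q.1 r.1)
    have hM := congrArg (resU (le_inf (le_inf
        (inf_le_left.trans (inf_le_left.trans inf_le_right))
        ((inf_le_left.trans inf_le_right).trans inf_le_right)) (inf_le_right.trans inf_le_right) :
        (L.U p.1 ⊓ M.U p.2) ⊓ (L.U q.1 ⊓ M.U q.2) ⊓ (L.U r.1 ⊓ M.U r.2) ≤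
          M.U p.2 ⊓ M.U q.2 ⊓ M.U r.2)) (M.cocycle p.2 q.2 r.2)
    simp only [map_mul, resU_resU] at hL hM
    rw [mul_mul_mul_comm, hL, hM]

/-- The pullback of an invertible sheaf along a morphism of schemes. -/
noncomputable def pullback (g : Y ⟶ X) (L : InvSheaf X) : InvSheaf Y where
  ι := L.ι
  U i := g ⁻¹ᵁ L.U i
  cover y := L.cover (g.base y)
  t i j := Units.map (g.appLE (L.U i ⊓ L.U j) (g ⁻¹ᵁ L.U i ⊓ g ⁻¹ᵁ L.U j)
    (preimage_inf_le g _ _)).hom.toMonoidHom (L.t i j)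
  cocycle i j k := by
    have e : (g ⁻¹ᵁ L.U i ⊓ g ⁻¹ᵁ L.U j ⊓ g ⁻¹ᵁ L.U k : Y.Opens) ≤
        g ⁻¹ᵁ (L.U i ⊓ L.U j ⊓ L.U k) := by
      rintro x ⟨⟨h₁, h₂⟩, h₃⟩
      exact ⟨⟨h₁, h₂⟩, h₃⟩
    rw [resU_appLE, resU_appLE, resU_appLE,
      ← appLE_resU g (inf_le_left : L.U i ⊓ L.U j ⊓ L.U k ≤ L.U i ⊓ L.U j) e,
      ← appLE_resU g (le_inf (inf_le_left.trans inf_le_right) inf_le_right :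
          L.U i ⊓ L.U j ⊓ L.U k ≤ L.U j ⊓ L.U k) e,
      ← appLE_resU g (le_inf (inf_le_left.trans inf_le_left) inf_le_right :
          L.U i ⊓ L.U j ⊓ L.U k ≤ L.U i ⊓ L.U k) e,
      ← map_mul, L.cocycle i j k]

/-- A section of an invertible sheaf over an open set, given by its components in the
trivialising cover. -/
structure Section (L : InvSheaf X) (V : X.Opens) : Type u where
  s : ∀ i, Γ(X, V ⊓ L.U i)
  compat : ∀ i j,
    X.presheaf.map (homOfLE (inf_le_left : V ⊓ L.U i ⊓ L.U j ≤ V ⊓ L.U i)).op (s i) =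
      (X.presheaf.map (homOfLE (le_inf (inf_le_left.trans inf_le_right) inf_le_right :
        V ⊓ L.U i ⊓ L.U j ≤ L.U i ⊓ L.U j)).op (L.t i j : Γ(X, L.U i ⊓ L.U j))) *
      X.presheaf.map (homOfLE (le_inf (inf_le_left.trans inf_le_left) inf_le_right :
        V ⊓ L.U i ⊓ L.U j ≤ V ⊓ L.U j)).op (s j)

/-- The section generates the stalk of the invertible sheaf at `x`. -/
def Section.IsGeneratorAt {L : InvSheaf X} {V : X.Opens} (σ : L.Section V) (x : X) : Prop :=
  ∃ (i : L.ι) (h : x ∈ V ⊓ L.U i), IsUnit (X.presheaf.germ (V ⊓ L.U i) x h (σ.s i))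

/-- The zero section test. -/
def Section.IsZero {L : InvSheaf X} {V : X.Opens} (σ : L.Section V) : Prop :=
  ∀ i, σ.s i = 0

/-- The non-vanishing locus of a section. -/
noncomputable def Section.nonvanishing {L : InvSheaf X} {V : X.Opens} (σ : L.Section V) :
    X.Opens :=
  ⨆ i, X.basicOpen (σ.s i)

/-- An invertible sheaf `L` is trivial (isomorphic to the structure sheaf) iff it admits a
nowhere vanishing global section. -/
def IsTrivial (L : InvSheaf X) : Prop :=
  ∃ σ : L.Section ⊤, ∀ x : X, σ.IsGeneratorAt x

/-- Ampleness of an invertible sheaf on a (quasi-compact) scheme, following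
Stacks Project 01PR/01PS: the affine non-vanishing loci of sections of positive tensor powers
cover the scheme. -/
def IsAmpleAbs (L : InvSheaf X) : Prop :=
  CompactSpace X ∧
    ∀ x : X, ∃ (n : ℤ) (_ : 0 < n) (σ : (L.pow n).Section ⊤),
      x ∈ σ.nonvanishing ∧ IsAffineOpen σ.nonvanishing

end InvSheaf

section Relative

variable {S : Scheme.{u}}

/-- `L` is `f`-free, i.e. the canonical homomorphism `f^* f_* L → L` is surjective:
equivalently, every point of `X` admits a section of `L`, defined over the preimage of an
open neighbourhood of its image, generating the stalk of `L` at that point. -/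
def RelFree (f : X ⟶ S) (L : InvSheaf X) : Prop :=
  ∀ x : X, ∃ (V : S.Opens) (_ : f.base x ∈ V) (σ : L.Section (f ⁻¹ᵁ V)), σ.IsGeneratorAt x

/-- `L` is `f`-semi-ample if some positive tensor power of `L` is `f`-free. -/
def RelSemiample (f : X ⟶ S) (L : InvSheaf X) : Prop :=
  ∃ n : ℤ, 0 < n ∧ RelFree f (L.pow n)

/-- `L` is `f`-ample: its restriction to the preimage of every affine open of the base
is ample. -/
def RelAmple (f : X ⟶ S) (L : InvSheaf X) : Prop :=
  ∀ V : S.Opens, IsAffineOpen V → (L.pullback (f ⁻¹ᵁ V).ι).IsAmpleAbs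

/-- The `f`-stable base locus `𝔹_f(L) = ⋂_{m ≥ 1} Supp Coker (f^* f_* L^m → L^m)`. -/
def StableBaseLocus (f : X ⟶ S) (L : InvSheaf X) : Set X :=
  {x : X | ∀ n : ℤ, 0 < n →
    ¬∃ (V : S.Opens) (_ : f.base x ∈ V) (σ : (L.pow n).Section (f ⁻¹ᵁ V)), σ.IsGeneratorAt x}

/-- A morphism has connected fibres if for every field `K` and every morphism
`Spec K → Y`, the fibre product is connected. -/
def ConnectedFibres {X Y : Scheme.{u}} (f : X ⟶ Y) : Prop :=
  ∀ (K : CommRingCat.{u}), IsField K → ∀ g : Spec K ⟶ Y,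
    ConnectedSpace (Limits.pullback f g : Scheme.{u})

end Relative

end FormalPaper

/-!
The kernel of `ρ^♯ : 𝒪_X → ρ_* 𝒪_{X_red}` consists of nilpotent sections, and since `X` is
noetherian their nilpotency index is bounded by a single `N`: finitely many affine charts have
noetherian rings, and basic opens inherit the bound by localisation. In characteristic `p`, with
`q = p ^ N ≥ N`, this gives `a ^ q = b ^ q` whenever `ρ^♯ a = ρ^♯ b`. Hence `q`-th powers of
sections of `𝒪_{X_red}` lift to `X`. A section of `(L|_{X_red})^n` generating the stalk at `y`
then lifts, after raising it to the power `q²`, to a section of `L^{n q²}` generating at `ρ y`;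
pulling sections back gives the converse, and surjectivity of `ρ` turns these pointwise
statements into the two claims.
-/

lemma pow_prime_pow_eq_of_sub_pow_eq_zero {R : Type*} [CommRing R] {p : ℕ} [Fact p.Prime]
    (hp : (p : R) = 0) {N k : ℕ} (hk : N ≤ p ^ k) {a b : R} (h : (a - b) ^ N = 0) :
    a ^ p ^ k = b ^ p ^ k := by
  nontriviality R
  have : CharP R p := (CharP.charP_iff_prime_eq_zero Fact.out).mpr hp
  rw [← sub_eq_zero, ← sub_pow_char_pow, ← Nat.sub_add_cancel hk, pow_add, h, mul_zero]

lemma IsLocalization.pow_eq_zero_of_isNilpotent {R S : Type*} [CommRing R] [CommRing S]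
    [Algebra R S] (M : Submonoid R) [IsLocalization M S] {N : ℕ}
    (hN : ∀ r : R, IsNilpotent r → r ^ N = 0) {t : S} (ht : IsNilpotent t) : t ^ N = 0 := by
  obtain ⟨⟨r, m⟩, hrm⟩ := IsLocalization.surj M t
  dsimp only at hrm
  obtain ⟨k, hk⟩ := ht
  have hrk : algebraMap R S (r ^ k) = 0 := by rw [map_pow, ← hrm, mul_pow, hk, zero_mul]
  obtain ⟨c, hc⟩ := (IsLocalization.map_eq_zero_iff M S _).mp hrk
  have hcr : (c * r : R) ^ N = 0 := hN _ ⟨k + 1, by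
    calc (c * r : R) ^ (k + 1) = (c ^ k * r) * (c * r ^ k) := by ring
      _ = 0 := by rw [hc, mul_zero]⟩
  have hunit : IsUnit (algebraMap R S (c * m)) := by
    rw [map_mul]; exact (IsLocalization.map_units S c).mul (IsLocalization.map_units S m)
  refine (hunit.pow N).mul_left_eq_zero.mp ?_
  rw [← mul_pow, map_mul, mul_left_comm, hrm, ← map_mul, ← map_pow, hcr, map_zero]

lemma IsNoetherianRing.exists_pow_eq_zero_of_isNilpotent (R : Type*) [CommRing R]
    [IsNoetherianRing R] : ∃ n : ℕ, ∀ r : R, IsNilpotent r → r ^ n = 0 := by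
  obtain ⟨n, hn⟩ := IsNoetherianRing.isNilpotent_nilradical R
  refine ⟨n, fun r hr => ?_⟩
  have := Ideal.pow_mem_pow (mem_nilradical.mpr hr) n
  rwa [hn, Ideal.zero_eq_bot, Ideal.mem_bot] at this

namespace AlgebraicGeometry

lemma Scheme.natCast_eq_zero_of_hom_spec {X : Scheme.{u}} {R : CommRingCat.{u}}
    (τ : X ⟶ Spec R) {n : ℕ} (hn : (n : R) = 0) (U : X.Opens) : (n : Γ(X, U)) = 0 := by
  have h : (n : Γ(Spec R, ⊤)) = 0 := by
    rw [← map_natCast (Scheme.ΓSpecIso R).inv.hom, hn, map_zero]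
  rw [← map_natCast (τ.appLE ⊤ U le_top).hom, h, map_zero]

lemma Scheme.exists_nilpotency_bound_on_affine_nhds (X : Scheme.{u}) [IsNoetherian X] :
    ∃ N : ℕ, ∀ x : X, ∃ V : X.Opens, IsAffineOpen V ∧ x ∈ V ∧
      ∀ r : Γ(X, V), IsNilpotent r → r ^ N = 0 := by
  choose e he using fun V : X.affineOpens =>
    have := IsLocallyNoetherian.component_noetherian V
    IsNoetherianRing.exists_pow_eq_zero_of_isNilpotent Γ(X, V)
  obtain ⟨T, hT⟩ := isCompact_univ.elim_finite_subcover (fun V : X.affineOpens => (V : Set X))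
    (fun V => V.1.isOpen) (by simpa [← SetLike.coe_set_eq] using (iSup_affineOpens_eq_top X).ge)
  refine ⟨T.sup e, fun x => ?_⟩
  obtain ⟨V, hVT, hxV⟩ := Set.mem_iUnion₂.mp (hT (Set.mem_univ x))
  exact ⟨V, V.2, hxV, fun r hr => pow_eq_zero_of_le (Finset.le_sup hVT) (he V r hr)⟩

namespace Scheme.Hom

variable {X Y : Scheme.{u}} (g : Y ⟶ X)

lemma app_map_apply {U V : X.Opens} (i : V ⟶ U) (s : Γ(X, U)) :
    g.app V (X.presheaf.map i.op s) =
      Y.presheaf.map ((Opens.map g.base).map i).op (g.app U s) := by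
  rw [← CommRingCat.comp_apply, g.naturality, CommRingCat.comp_apply]
  rfl

lemma app_map_apply_eq_map_appLE {U V : X.Opens} {C : Y.Opens} (e : C ≤ g ⁻¹ᵁ U) (i : V ⟶ U)
    (j : g ⁻¹ᵁ V ⟶ C) (s : Γ(X, U)) :
    g.app V (X.presheaf.map i.op s) = Y.presheaf.map j.op (g.appLE U C e s) := by
  rw [← CommRingCat.comp_apply, ← CommRingCat.comp_apply, g.appLE_map, g.app_eq_appLE,
    g.map_appLE]

lemma isNilpotent_of_app_eq_zero [Surjective g] {U : X.Opens} (hU : IsCompact (U : Set X))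
    {s : Γ(X, U)} (hs : g.app U s = 0) : IsNilpotent s := by
  rw [Scheme.isNilpotent_iff_basicOpen_eq_bot_of_isCompact hU, eq_bot_iff]
  intro x hx
  obtain ⟨y, rfl⟩ := g.surjective x
  have hy : y ∈ g ⁻¹ᵁ X.basicOpen s := hx
  rwa [Scheme.preimage_basicOpen, hs, Scheme.basicOpen_zero] at hy

lemma exists_pow_eq_zero_of_app_eq_zero [IsNoetherian X] [Surjective g] :
    ∃ N : ℕ, ∀ (U : X.Opens) (s : Γ(X, U)), g.app U s = 0 → s ^ N = 0 := by
  obtain ⟨N, hN⟩ := X.exists_nilpotency_bound_on_affine_nhds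
  refine ⟨N, fun U s hs => TopCat.Presheaf.section_ext X.sheaf U _ _ fun z hzU => ?_⟩
  obtain ⟨V, hV, hzV, hVN⟩ := hN z
  obtain ⟨r, hrUV, hzr⟩ := hV.exists_basicOpen_le (V := U ⊓ V) ⟨z, hzU, hzV⟩ hzV
  have hrU : X.basicOpen r ≤ U := hrUV.trans inf_le_left
  have := hV.isLocalization_basicOpen r
  have ht : (X.presheaf.map (homOfLE hrU).op s) ^ N = 0 :=
    IsLocalization.pow_eq_zero_of_isNilpotent (Submonoid.powers r) hVN <|
      g.isNilpotent_of_app_eq_zero (hV.basicOpen r).isCompact <| by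
        rw [g.app_map_apply, hs, map_zero]
  change X.presheaf.germ U z hzU (s ^ N) = X.presheaf.germ U z hzU 0
  rw [map_zero, ← X.presheaf.germ_res_apply (homOfLE hrU) z hzr, map_pow, ht, map_zero]

lemma exists_app_eq_pow [IsClosedImmersion g] {q : ℕ}
    (hq : ∀ (U : X.Opens) (a b : Γ(X, U)), g.app U a = g.app U b → a ^ q = b ^ q)
    (U : X.Opens) (t : Γ(Y, g ⁻¹ᵁ U)) : ∃ s : Γ(X, U), g.app U s = t ^ q := by
  have hlocal : ∀ z ∈ U, ∃ (W : X.Opens) (hWU : W ≤ U) (ℓ : Γ(X, W)), z ∈ W ∧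
      g.app W ℓ = Y.presheaf.map (homOfLE (g.preimage_mono hWU)).op t := by
    intro z hz
    obtain ⟨-, ⟨W, hW, rfl⟩, hzW, hWU⟩ :=
      X.isBasis_affineOpens.exists_subset_of_mem_open hz U.2
    obtain ⟨ℓ, hℓ⟩ :=
      g.app_surjective W hW (Y.presheaf.map (homOfLE (g.preimage_mono hWU)).op t)
    exact ⟨W, hWU, ℓ, hzW, hℓ⟩
  choose W hWU ℓ hzW hℓ using hlocal
  have hcover : U ≤ ⨆ z : U, W z z.2 := fun z hz => Opens.mem_iSup.mpr ⟨⟨z, hz⟩, hzW z hz⟩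
  -- The local lifts need not agree on overlaps, but their `q`-th powers do, by `hq`.
  obtain ⟨s, hs, -⟩ : ∃! s : Γ(X, U), ∀ z : U,
      X.presheaf.map (homOfLE (hWU z z.2)).op s = ℓ z z.2 ^ q :=
    TopCat.Sheaf.existsUnique_gluing' X.sheaf (fun z : U => W z z.2) U
      (fun z => homOfLE (hWU z z.2)) hcover (fun z => ℓ z z.2 ^ q) fun z z' => by
      change X.presheaf.map _ _ = X.presheaf.map _ _
      rw [map_pow, map_pow]
      refine hq _ _ _ ?_
      rw [g.app_map_apply, g.app_map_apply, hℓ, hℓ, ← CommRingCat.comp_apply,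
        ← CommRingCat.comp_apply, ← Functor.map_comp, ← Functor.map_comp]
      rfl
  refine ⟨s, TopCat.Presheaf.section_ext Y.sheaf _ _ _ fun y hy => ?_⟩
  change Y.presheaf.germ _ y hy _ = Y.presheaf.germ _ y hy _
  have hy' : g.base y ∈ U := hy
  have hyW : y ∈ g ⁻¹ᵁ W (g.base y) hy' := hzW _ hy'
  have hs' := congrArg (Y.presheaf.germ _ y hyW) (congrArg (g.app _) (hs ⟨g.base y, hy'⟩))
  change Y.presheaf.germ _ y _ (g.app _ (X.presheaf.map _ s)) = _ at hs'
  rwa [g.app_map_apply, Y.presheaf.germ_res_apply, map_pow, hℓ, ← map_pow,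
    Y.presheaf.germ_res_apply] at hs'

end Scheme.Hom

end AlgebraicGeometry

namespace FormalPaper

variable {X Y S : Scheme.{u}}

namespace InvSheaf

lemma pullback_pow (g : Y ⟶ X) (L : InvSheaf X) (n : ℤ) :
    (L.pow n).pullback g = (L.pullback g).pow n := by
  change InvSheaf.mk _ _ _ _ _ = InvSheaf.mk _ _ _ _ _
  congr 1
  funext i j
  exact map_zpow _ _ _

lemma pow_pow (L : InvSheaf X) (m n : ℤ) : (L.pow m).pow n = L.pow (m * n) := by
  change InvSheaf.mk _ _ _ _ _ = InvSheaf.mk _ _ _ _ _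
  congr 1
  funext i j
  exact (zpow_mul _ _ _).symm

noncomputable def Section.pullback (g : Y ⟶ X) {L : InvSheaf X} {W : X.Opens}
    (σ : L.Section W) : (L.pullback g).Section (g ⁻¹ᵁ W) where
  s i := g.app (W ⊓ L.U i) (σ.s i)
  compat i j := by
    change L.ι at i j
    have h := congrArg (g.app _) (σ.compat i j)
    rwa [map_mul, g.app_map_apply_eq_map_appLE (preimage_inf_le g (L.U i) (L.U j)),
      g.app_map_apply, g.app_map_apply] at h

lemma Section.IsGeneratorAt.pullback (g : Y ⟶ X) {L : InvSheaf X} {W : X.Opens}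
    {σ : L.Section W} {y : Y} (h : σ.IsGeneratorAt (g.base y)) :
    (σ.pullback g).IsGeneratorAt y := by
  obtain ⟨i, hy, hu⟩ := h
  refine ⟨i, hy, ?_⟩
  have := hu.map (g.stalkMap y).hom
  rwa [Scheme.Hom.germ_stalkMap_apply] at this

lemma exists_section_pow_isGeneratorAt_of_pullback (g : Y ⟶ X) [IsClosedImmersion g] {q : ℕ}
    (hq : ∀ (U : X.Opens) (a b : Γ(X, U)), g.app U a = g.app U b → a ^ q = b ^ q)
    {L : InvSheaf X} {W : X.Opens} (σ : (L.pullback g).Section (g ⁻¹ᵁ W)) {y : Y}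
    (hy : σ.IsGeneratorAt y) :
    ∃ σ' : (L.pow (q * q)).Section W, σ'.IsGeneratorAt (g.base y) := by
  choose ℓ hℓ using fun i => g.exists_app_eq_pow hq (W ⊓ L.U i) (σ.s i)
  -- The lifts `ℓ i` satisfy the cocycle relation for `L ^ q` only modulo the kernel of `g`;
  -- one more `q`-th power makes it hold on the nose.
  have hcompat : ∀ i j : L.ι,
      X.presheaf.map (homOfLE (inf_le_left : W ⊓ L.U i ⊓ L.U j ≤ W ⊓ L.U i)).op (ℓ i ^ q) =
        X.presheaf.map (homOfLE (le_inf (inf_le_left.trans inf_le_right) inf_le_right :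
          W ⊓ L.U i ⊓ L.U j ≤ L.U i ⊓ L.U j)).op (L.t i j ^ ((q : ℤ) * q)).val *
        X.presheaf.map (homOfLE (le_inf (inf_le_left.trans inf_le_left) inf_le_right :
          W ⊓ L.U i ⊓ L.U j ≤ W ⊓ L.U j)).op (ℓ j ^ q) := by
    intro i j
    simp only [zpow_mul, zpow_natCast, Units.val_pow_eq_pow_val, map_pow]
    rw [← mul_pow]
    refine hq _ _ _ ?_
    rw [map_mul, map_pow, g.app_map_apply_eq_map_appLE (preimage_inf_le g (L.U i) (L.U j)),
      g.app_map_apply, g.app_map_apply, hℓ, hℓ]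
    exact (map_pow _ _ _).trans ((congrArg (· ^ q) (σ.compat i j)).trans
      ((mul_pow _ _ _).trans (congrArg _ (map_pow _ _ _).symm)))
  refine ⟨⟨fun i => ℓ i ^ q, hcompat⟩, ?_⟩
  obtain ⟨i, hyi, hu⟩ : ∃ (i : L.ι) (h : y ∈ g ⁻¹ᵁ (W ⊓ L.U i)),
      IsUnit (Y.presheaf.germ (g ⁻¹ᵁ (W ⊓ L.U i)) y h (σ.s i)) := hy
  have hxi : g.base y ∈ W ⊓ L.U i := hyi
  refine ⟨i, hxi, ?_⟩
  change IsUnit (X.presheaf.germ (W ⊓ L.U i) (g.base y) hxi (ℓ i ^ q))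
  rw [map_pow]
  refine IsUnit.pow q ((isUnit_map_iff (g.stalkMap y).hom _).mp ?_)
  rw [Scheme.Hom.germ_stalkMap_apply, hℓ]
  convert hu.pow q using 1
  exact map_pow _ _ _

end InvSheaf

/-- `RelFree f L` is `∀ x, RelFreeAt f L x`, and `x ∈ StableBaseLocus f L` says that
`RelFreeAt f (L.pow n) x` fails for every `n > 0`; both hold by definition. -/
def RelFreeAt (f : X ⟶ S) (L : InvSheaf X) (x : X) : Prop :=
  ∃ (V : S.Opens) (_ : f.base x ∈ V) (σ : L.Section (f ⁻¹ᵁ V)), σ.IsGeneratorAt x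

lemma relFreeAt_congr (f : X ⟶ S) {L M : InvSheaf X} (h : L = M) (x : X) :
    RelFreeAt f L x ↔ RelFreeAt f M x := by
  subst h; rfl

lemma RelFreeAt.pullback {f : X ⟶ S} {L : InvSheaf X} (g : Y ⟶ X) {y : Y}
    (h : RelFreeAt f L (g.base y)) : RelFreeAt (g ≫ f) (L.pullback g) y := by
  obtain ⟨V, hV, σ, hσ⟩ := h
  exact ⟨V, hV, σ.pullback g, hσ.pullback g⟩

lemma RelFreeAt.pow_of_pullback {f : X ⟶ S} {L : InvSheaf X} (g : Y ⟶ X) [IsClosedImmersion g]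
    {q : ℕ} (hq : ∀ (U : X.Opens) (a b : Γ(X, U)), g.app U a = g.app U b → a ^ q = b ^ q)
    {y : Y} (h : RelFreeAt (g ≫ f) (L.pullback g) y) :
    RelFreeAt f (L.pow (q * q)) (g.base y) := by
  obtain ⟨V, hV, σ, hσ⟩ := h
  obtain ⟨σ', hσ'⟩ :=
    InvSheaf.exists_section_pow_isGeneratorAt_of_pullback g hq (W := f ⁻¹ᵁ V) σ hσ
  exact ⟨V, hV, σ', hσ'⟩

section

variable {f : X ⟶ S} {L : InvSheaf X} {g : Y ⟶ X} {q : ℕ}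

lemma relFreeAt_pullback_pow {n : ℤ} {y : Y} (h : RelFreeAt f (L.pow n) (g.base y)) :
    RelFreeAt (g ≫ f) ((L.pullback g).pow n) y :=
  (relFreeAt_congr _ (L.pullback_pow g n) y).mp (h.pullback g)

lemma relFreeAt_pow_of_pullback_pow [IsClosedImmersion g]
    (hq : ∀ (U : X.Opens) (a b : Γ(X, U)), g.app U a = g.app U b → a ^ q = b ^ q)
    {n : ℤ} {y : Y} (h : RelFreeAt (g ≫ f) ((L.pullback g).pow n) y) :
    RelFreeAt f (L.pow (n * (q * q))) (g.base y) := by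
  rw [← L.pullback_pow g n] at h
  exact (relFreeAt_congr _ (L.pow_pow n _) _).mp (h.pow_of_pullback g hq)

lemma preimage_stableBaseLocus [IsClosedImmersion g] (hq0 : 0 < q)
    (hq : ∀ (U : X.Opens) (a b : Γ(X, U)), g.app U a = g.app U b → a ^ q = b ^ q) :
    g.base ⁻¹' StableBaseLocus f L = StableBaseLocus (g ≫ f) (L.pullback g) := by
  ext y
  constructor
  · exact fun hx n hn h => hx _ (by positivity) (relFreeAt_pow_of_pullback_pow hq h)
  · exact fun hy n hn h => hy n hn (relFreeAt_pullback_pow h)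

lemma relSemiample_pullback_iff [IsClosedImmersion g] [Surjective g] (hq0 : 0 < q)
    (hq : ∀ (U : X.Opens) (a b : Γ(X, U)), g.app U a = g.app U b → a ^ q = b ^ q) :
    RelSemiample f L ↔ RelSemiample (g ≫ f) (L.pullback g) := by
  constructor
  · rintro ⟨n, hn, hfree⟩
    exact ⟨n, hn, fun y => relFreeAt_pullback_pow (hfree (g.base y))⟩
  · rintro ⟨n, hn, hfree⟩
    refine ⟨n * (q * q), by positivity, fun x => ?_⟩
    obtain ⟨y, rfl⟩ := g.surjective x
    exact relFreeAt_pow_of_pullback_pow hq (hfree y)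

end

end FormalPaper

open FormalPaper in
theorem stableBaseLocus_reduction_general
    (p : ℕ) [Fact p.Prime]
    (X S : Scheme.{u}) [IsNoetherian X]
    (τ : S ⟶ Spec (CommRingCat.of (ULift.{u} (ZMod p))))
    (f : X ⟶ S) (L : FormalPaper.InvSheaf X)
    (Xr : Scheme.{u}) (ρ : Xr ⟶ X) [IsClosedImmersion ρ] [Surjective ρ] :
    StableBaseLocus f L = ρ.base '' StableBaseLocus (ρ ≫ f) (L.pullback ρ) ∧
    (RelSemiample f L ↔ RelSemiample (ρ ≫ f) (L.pullback ρ)) := by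
  have hp : ∀ U : X.Opens, (p : Γ(X, U)) = 0 :=
    Scheme.natCast_eq_zero_of_hom_spec (f ≫ τ) (by ext; simp)
  obtain ⟨N, hN⟩ := ρ.exists_pow_eq_zero_of_app_eq_zero
  have hq : ∀ (U : X.Opens) (a b : Γ(X, U)), ρ.app U a = ρ.app U b → a ^ p ^ N = b ^ p ^ N :=
    fun U a b h => pow_prime_pow_eq_of_sub_pow_eq_zero (hp U)
      (Nat.lt_pow_self (Fact.out : p.Prime).one_lt).le (hN U _ (by rw [map_sub, h, sub_self]))
  have hq0 : 0 < p ^ N := pow_pos (Fact.out : p.Prime).pos N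
  refine ⟨?_, relSemiample_pullback_iff hq0 hq⟩
  rw [← preimage_stableBaseLocus hq0 hq, Set.image_preimage_eq _ ρ.surjective]

open FormalPaper in
theorem stableBaseLocus_reduction
    (p : ℕ) [Fact p.Prime]
    (X S : Scheme.{u}) [IsNoetherian X] [IsNoetherian S]
    (τ : S ⟶ Spec (CommRingCat.of (ULift.{u} (ZMod p))))
    (f : X ⟶ S) [IsProper f] (L : FormalPaper.InvSheaf X)
    (Xr : Scheme.{u}) (ρ : Xr ⟶ X) [IsClosedImmersion ρ] [IsReduced Xr] [Surjective ρ] :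
    StableBaseLocus f L = ρ.base '' StableBaseLocus (ρ ≫ f) (L.pullback ρ) ∧
    (RelSemiample f L ↔ RelSemiample (ρ ≫ f) (L.pullback ρ)) :=
  stableBaseLocus_reduction_general p X S τ f L Xr ρ
end

section
/- Let φ : A → B, ψ : A → C, ψ' : B → D, φ' : C → D be a commutative square of ring homomorphisms such that: (1) φ : A → B is injective and makes B integral over A; (2) ψ : A → C is surjective and the square is cocartesian, i.e. the induced map B ⊗_A C → D is bijective; (3) the sequence 0 → A → B ⊕ C → D → 0 (with maps (φ, ψ) and ψ' − φ') is exact. Then the induced sequence of sheaves of abelian groups on Spec A, namely 1 → O^×_{Spec A} → (φ^♯)_* O^×_{Spec B} × (ψ^♯)_* O^×_{Spec C} → (ψ^♯ ∘ φ'^♯)_* O^×_{Spec D} → 1, is exact, where φ^♯, ψ^♯, φ'^♯ denote the morphisms of spectra induced by φ, ψ, φ' and the third arrow is given by the quotient of units. -/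
/-!
Localising at a prime `p` of `A` keeps `A` the pullback `B ×_D C`, so it suffices to treat a
pullback square of rings with `A` local. The units of a pullback of rings are the pullback of
the unit groups, which gives exactness on the left and in the middle. On the right, `B → D` is
onto and its kernel lies in the Jacobson radical of `B`: a kernel element comes from some
`a ∈ A` that dies in `C`, so `a` is a non-unit of the local ring `A`, and every maximal ideal
of the integral extension `B` lies over the maximal ideal of `A`. A surjection whose kernel lies
in the Jacobson radical is surjective on units.
-/

universe u

theorem Units.map_surjective_of_ker_le_jacobson {X Z : Type*} [CommRing X] [CommRing Z]
    (f : X →+* Z) (hf : Function.Surjective f) (hker : RingHom.ker f ≤ Ideal.jacobson ⊥) :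
    Function.Surjective (Units.map f.toMonoidHom) := by
  intro w
  obtain ⟨b, hb⟩ := hf w
  obtain ⟨e, he⟩ := hf ↑w⁻¹
  have hbe : b * e - 1 ∈ RingHom.ker f := by
    rw [RingHom.mem_ker, map_sub, map_mul, hb, he, map_one, Units.mul_inv, sub_self]
  have hb_unit : IsUnit b :=
    isUnit_of_mul_isUnit_left (Ideal.isUnit_of_sub_one_mem_jacobson_bot _ (hker hbe))
  exact ⟨hb_unit.unit, Units.ext hb⟩

section Pullback

variable {R X Y Z : Type*} [CommRing R] [CommRing X] [CommRing Y] [CommRing Z]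
  {f : R →+* X} {g : R →+* Y} {f' : X →+* Z} {g' : Y →+* Z}

theorem units_map_eq_iff_exists_of_isPullback (hf : Function.Injective f)
    (hpb : ∀ v : X × Y, f' v.1 = g' v.2 ↔ ∃ r : R, (f r, g r) = v) (v : Xˣ × Yˣ) :
    Units.map f'.toMonoidHom v.1 = Units.map g'.toMonoidHom v.2 ↔
      ∃ u : Rˣ, (Units.map f.toMonoidHom u, Units.map g.toMonoidHom u) = v := by
  constructor
  · intro h
    obtain ⟨r, hr⟩ := (hpb (v.1, v.2)).mp (congrArg Units.val h)
    obtain ⟨r', hr'⟩ := (hpb (↑v.1⁻¹, ↑v.2⁻¹)).mp (congrArg Units.val (congrArg (·⁻¹) h))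
    obtain ⟨hr₁, hr₂⟩ := Prod.mk_inj.mp hr
    obtain ⟨hr'₁, -⟩ := Prod.mk_inj.mp hr'
    have hrr' : r * r' = 1 := hf (by rw [map_mul, map_one, hr₁, hr'₁, Units.mul_inv])
    exact ⟨⟨r, r', hrr', mul_comm r r' ▸ hrr'⟩, Prod.ext (Units.ext hr₁) (Units.ext hr₂)⟩
  · rintro ⟨u, rfl⟩
    exact Units.ext ((hpb _).mpr ⟨u, rfl⟩)

theorem ker_le_jacobson_of_isPullback [IsLocalRing R] [Nontrivial Y] (hf : f.IsIntegral)
    (hpb : ∀ v : X × Y, f' v.1 = g' v.2 ↔ ∃ r : R, (f r, g r) = v) :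
    RingHom.ker f' ≤ Ideal.jacobson ⊥ := by
  intro k hk
  obtain ⟨r, hr⟩ := (hpb (k, 0)).mp (by rw [map_zero]; exact hk)
  obtain ⟨rfl, hgr⟩ := Prod.mk_inj.mp hr
  have hr_mem : r ∈ IsLocalRing.maximalIdeal R := fun hr_unit =>
    not_isUnit_zero (hgr ▸ hr_unit.map g)
  rw [Ideal.jacobson, Ideal.mem_sInf]
  rintro M ⟨-, hM⟩
  have : (M.comap f).IsMaximal := Ideal.isMaximal_comap_of_isIntegral_of_isMaximal' f hf M
  rw [← Ideal.mem_comap, IsLocalRing.eq_maximalIdeal this]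
  exact hr_mem

theorem units_exact_of_isPullback [IsLocalRing R] (hf : Function.Injective f)
    (hint : f.IsIntegral) (hpb : ∀ v : X × Y, f' v.1 = g' v.2 ↔ ∃ r : R, (f r, g r) = v)
    (hf' : Function.Surjective f') :
    Function.Injective (fun u : Rˣ => (Units.map f.toMonoidHom u, Units.map g.toMonoidHom u)) ∧
    (∀ v : Xˣ × Yˣ, Units.map f'.toMonoidHom v.1 = Units.map g'.toMonoidHom v.2 ↔
      ∃ u : Rˣ, (Units.map f.toMonoidHom u, Units.map g.toMonoidHom u) = v) ∧
    (∀ w : Zˣ, ∃ v : Xˣ × Yˣ,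
      Units.map f'.toMonoidHom v.1 * (Units.map g'.toMonoidHom v.2)⁻¹ = w) := by
  refine ⟨fun u₁ u₂ h => Units.map_injective hf (congrArg Prod.fst h),
    units_map_eq_iff_exists_of_isPullback hf hpb, fun w => ?_⟩
  cases subsingleton_or_nontrivial Z with
  | inl _ => exact ⟨1, Subsingleton.elim _ _⟩
  | inr _ =>
    have : Nontrivial Y := g'.domain_nontrivial
    obtain ⟨x, rfl⟩ := Units.map_surjective_of_ker_le_jacobson f' hf'
      (ker_le_jacobson_of_isPullback hint hpb) w
    exact ⟨(x, 1), by rw [map_one, inv_one, mul_one]⟩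

end Pullback

section Localization

variable {A B C D : Type*} [CommRing A] [CommRing B] [CommRing C] [CommRing D]

/-- `Submonoid.le_comap_map` in the form `IsLocalization.map` accepts for
`Localization (S.map f.toMonoidHom)`, whose instance is not found for `S.map f`. -/
theorem Submonoid.le_comap_map_ringHom (f : A →+* B) (S : Submonoid A) :
    S ≤ (S.map f.toMonoidHom).comap f :=
  S.le_comap_map

theorem Submonoid.map_le_comap_map_comp (f : A →+* B) (g : B →+* D) (S : Submonoid A) :
    S.map f.toMonoidHom ≤ (S.map (g.comp f).toMonoidHom).comap g := by
  rintro _ ⟨a, ha, rfl⟩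
  exact ⟨a, ha, rfl⟩

theorem IsLocalization.exists_mk'_eq_map (f : A →+* B) (S : Submonoid A)
    (x : Localization (S.map f.toMonoidHom)) :
    ∃ (b : B) (s : S),
      IsLocalization.mk' _ b ⟨f s, Submonoid.mem_map_of_mem f.toMonoidHom s.2⟩ = x := by
  obtain ⟨b, ⟨_, s, hs, rfl⟩, rfl⟩ := IsLocalization.exists_mk'_eq (S.map f.toMonoidHom) x
  exact ⟨b, ⟨s, hs⟩, rfl⟩

variable (φ : A →+* B) (ψ : A →+* C) (ψ' : B →+* D) (φ' : C →+* D)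

theorem localization_map_injective (hφ : Function.Injective φ) (S : Submonoid A) :
    Function.Injective (IsLocalization.map (Localization (S.map φ.toMonoidHom)) φ
      (S.le_comap_map_ringHom φ) : Localization S →+* _) :=
  have : IsLocalization (S.map φ) (Localization (S.map φ.toMonoidHom)) :=
    Localization.isLocalization
  IsLocalization.map_injective_of_injective S _ _ hφ

theorem localization_map_eq_iff_exists_of_isPullback (hcomm : ψ'.comp φ = φ'.comp ψ)
    (S : Submonoid A) (hpb : ∀ bc : B × C, ψ' bc.1 = φ' bc.2 ↔ ∃ a : A, (φ a, ψ a) = bc)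
    (v : Localization (S.map φ.toMonoidHom) × Localization (S.map ψ.toMonoidHom)) :
    IsLocalization.map (Localization (S.map (ψ'.comp φ).toMonoidHom)) ψ'
        (S.map_le_comap_map_comp φ ψ') v.1 =
      IsLocalization.map (Localization (S.map (ψ'.comp φ).toMonoidHom)) φ'
        (hcomm ▸ S.map_le_comap_map_comp ψ φ') v.2 ↔
    ∃ a : Localization S,
      (IsLocalization.map _ φ (S.le_comap_map_ringHom φ) a,
        IsLocalization.map _ ψ (S.le_comap_map_ringHom ψ) a) = v := by
  have hc (a : A) : ψ' (φ a) = φ' (ψ a) := RingHom.congr_fun hcomm a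
  constructor
  · obtain ⟨x, y⟩ := v
    obtain ⟨b, s, rfl⟩ := IsLocalization.exists_mk'_eq_map φ S x
    obtain ⟨c, s', rfl⟩ := IsLocalization.exists_mk'_eq_map ψ S y
    rw [IsLocalization.map_mk', IsLocalization.map_mk', IsLocalization.eq]
    rintro ⟨⟨_, t, ht, rfl⟩, h⟩
    obtain ⟨a, ha⟩ := (hpb (φ (t * s') * b, ψ (t * s) * c)).mp <| by
      simp only [RingHom.toMonoidHom_eq_coe, MonoidHom.coe_coe, RingHom.comp_apply, map_mul,
        hc] at h ⊢
      linear_combination h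
    obtain ⟨ha₁, ha₂⟩ := Prod.mk_inj.mp ha
    refine ⟨IsLocalization.mk' _ a (⟨t, ht⟩ * s * s'), ?_⟩
    rw [IsLocalization.map_mk', IsLocalization.map_mk']
    refine Prod.ext (IsLocalization.mk'_eq_of_eq ?_) (IsLocalization.mk'_eq_of_eq ?_)
    · simp only [ha₁, Submonoid.coe_mul, map_mul]
      ring
    · simp only [ha₂, Submonoid.coe_mul, map_mul]
      ring
  · rintro ⟨a, rfl⟩
    obtain ⟨a, s, rfl⟩ := IsLocalization.exists_mk'_eq S a
    rw [IsLocalization.map_mk', IsLocalization.map_mk', IsLocalization.map_mk',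
      IsLocalization.map_mk']
    exact IsLocalization.mk'_eq_of_eq (by simp only [hc])

theorem RingHom.surjective_of_surjective_sub (hcomm : ψ'.comp φ = φ'.comp ψ)
    (hψ : Function.Surjective ψ)
    (hsub : Function.Surjective fun bc : B × C => ψ' bc.1 - φ' bc.2) :
    Function.Surjective ψ' := by
  intro d
  obtain ⟨⟨b, c⟩, rfl⟩ := hsub d
  obtain ⟨a, rfl⟩ := hψ c
  exact ⟨b - φ a, by rw [map_sub, ← RingHom.comp_apply, hcomm, RingHom.comp_apply]⟩

theorem localization_map_surjective (hψ' : Function.Surjective ψ') (S : Submonoid A) :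
    Function.Surjective (IsLocalization.map (Localization (S.map (ψ'.comp φ).toMonoidHom)) ψ'
      (S.map_le_comap_map_comp φ ψ') : Localization (S.map φ.toMonoidHom) →+* _) := by
  intro z
  obtain ⟨d, ⟨_, s, hs, rfl⟩, rfl⟩ :=
    IsLocalization.exists_mk'_eq (S.map (ψ'.comp φ).toMonoidHom) z
  obtain ⟨b, rfl⟩ := hψ' d
  exact ⟨IsLocalization.mk' _ b ⟨φ s, Submonoid.mem_map_of_mem φ.toMonoidHom hs⟩,
    by rw [IsLocalization.map_mk']; rfl⟩

end Localization

theorem units_sheaf_sequence_exact_of_conductor_square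
    (A B C D : Type u) [CommRing A] [CommRing B] [CommRing C] [CommRing D]
    (φ : A →+* B) (ψ : A →+* C) (ψ' : B →+* D) (φ' : C →+* D)
    (hcomm : ψ'.comp φ = φ'.comp ψ)
    (hinj : Function.Injective φ) (hint : φ.IsIntegral)
    (hsurj : Function.Surjective ψ)
    (hexact₂ : ∀ bc : B × C, ψ' bc.1 = φ' bc.2 ↔ ∃ a : A, (φ a, ψ a) = bc)
    (hexact₃ : Function.Surjective (fun bc : B × C => ψ' bc.1 - φ' bc.2)) :
    ∀ p : PrimeSpectrum A,
      letI S := p.asIdeal.primeCompl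
      letI mapAB : Localization S →+* Localization (S.map φ.toMonoidHom) :=
        IsLocalization.map _ φ
          (show S ≤ (S.map φ.toMonoidHom).comap φ.toMonoidHom from
            fun a ha => ⟨a, ha, rfl⟩)
      letI mapAC : Localization S →+* Localization (S.map ψ.toMonoidHom) :=
        IsLocalization.map _ ψ
          (show S ≤ (S.map ψ.toMonoidHom).comap ψ.toMonoidHom from
            fun a ha => ⟨a, ha, rfl⟩)
      letI mapBD : Localization (S.map φ.toMonoidHom) →+*
          Localization (S.map (ψ'.comp φ).toMonoidHom) :=
        IsLocalization.map _ ψ'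
          (show S.map φ.toMonoidHom ≤
              (S.map (ψ'.comp φ).toMonoidHom).comap ψ'.toMonoidHom from by
            rintro b ⟨a, ha, rfl⟩
            exact ⟨a, ha, rfl⟩)
      letI mapCD : Localization (S.map ψ.toMonoidHom) →+*
          Localization (S.map (ψ'.comp φ).toMonoidHom) :=
        IsLocalization.map _ φ'
          (show S.map ψ.toMonoidHom ≤
              (S.map (ψ'.comp φ).toMonoidHom).comap φ'.toMonoidHom from by
            rintro c ⟨a, ha, rfl⟩
            refine ⟨a, ha, ?_⟩
            show (ψ'.comp φ) a = φ' (ψ a)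
            rw [hcomm]
            rfl)
      -- exactness of `1 → (A_p)^× → (B_p)^× × (C_p)^× → (D_p)^× → 1`
      Function.Injective (fun u : (Localization S)ˣ =>
          (Units.map mapAB.toMonoidHom u, Units.map mapAC.toMonoidHom u)) ∧
      (∀ v : (Localization (S.map φ.toMonoidHom))ˣ × (Localization (S.map ψ.toMonoidHom))ˣ,
        Units.map mapBD.toMonoidHom v.1 = Units.map mapCD.toMonoidHom v.2 ↔
          ∃ u : (Localization S)ˣ,
            (Units.map mapAB.toMonoidHom u, Units.map mapAC.toMonoidHom u) = v) ∧
      (∀ w : (Localization (S.map (ψ'.comp φ).toMonoidHom))ˣ,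
        ∃ v : (Localization (S.map φ.toMonoidHom))ˣ × (Localization (S.map ψ.toMonoidHom))ˣ,
          Units.map mapBD.toMonoidHom v.1 * (Units.map mapCD.toMonoidHom v.2)⁻¹ = w) := by
  intro p
  have hψ' := RingHom.surjective_of_surjective_sub φ ψ ψ' φ' hcomm hsurj hexact₃
  exact units_exact_of_isPullback (localization_map_injective φ hinj _)
    (isIntegral_localization' hint _)
    (localization_map_eq_iff_exists_of_isPullback φ ψ ψ' φ' hcomm _ hexact₂)
    (localization_map_surjective φ ψ' hψ' _)
end
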